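/- arXiv:1712.05075 — 2 statements merged into one kernel-verified Lean document; each statement's English description precedes it below -/
import Mathlib

section
/- Let α > -2 with α ≠ -1, and let f be a measurable function on ℂ supported in B(0,R) with R ≤ 1 satisfying |f(z)| ≤ k|z|^α. Then the Cauchy transform K(f)(ζ) = (1/(2πi)) ∫ f(z)/(z-ζ) dz∧dz̄ satisfies a bound |K(f)(ζ)| ≤ C·k·|ζ|^{min(α+1,0)} for all ζ ≠ 0, where C depends only on α. -/
/-!
Put `s = ‖ζ‖ / 2`. Where `‖z‖ ≤ s` the kernel `1 / (z - ζ)` has norm at most `1 / s`; where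
`‖z - ζ‖ ≤ s < ‖z‖` the weight `‖z‖ ^ α` is bounded and `1 / ‖z - ζ‖` is integrable; everywhere
else `‖z‖ ≤ 3 ‖z - ζ‖`, so the integrand is `O(‖z‖ ^ (α - 1))`. Polar coordinates turn the three
resulting integrals over (pieces of) the unit disc into one-dimensional integrals of powers of `r`,
each of which is `O(s ^ min (α + 1) 0)`.
-/

open MeasureTheory Real Set
open scoped ENNReal

namespace Complex

theorem lintegral_comp_norm {g : ℝ → ℝ≥0∞} (hg : Measurable g) :
    ∫⁻ z : ℂ, g ‖z‖ = ENNReal.ofReal (2 * π) * ∫⁻ r in Ioi (0 : ℝ), ENNReal.ofReal r * g r := by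
  rw [← Complex.lintegral_comp_polarCoord_symm,
    setLIntegral_congr_fun polarCoord.open_target.measurableSet
      (g := fun p => ENNReal.ofReal p.1 * g p.1) fun p hp => by
        simp [abs_of_pos (show 0 < p.1 from hp.1)],
    polarCoord_target, Measure.volume_eq_prod, ← Measure.prod_restrict,
    lintegral_prod _ (by fun_prop)]
  simp only [lintegral_const, Measure.restrict_apply MeasurableSet.univ, univ_inter, volume_Ioo]
  rw [lintegral_mul_const' _ _ ENNReal.ofReal_ne_top, mul_comm]
  ring_nf

theorem lintegral_indicator_rpow_norm {β a b : ℝ} (ha : 0 ≤ a) (hab : a ≤ b)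
    (hi : IntervalIntegrable (fun r => r ^ (β + 1)) volume a b) :
    ∫⁻ z : ℂ, (Ioc a b).indicator (fun r => ENNReal.ofReal (r ^ β)) ‖z‖
      = ENNReal.ofReal (2 * π * ∫ r in a..b, r ^ (β + 1)) := by
  have hpos : Ioc a b ⊆ Ioi 0 := fun r hr => ha.trans_lt hr.1
  have hpow : ∀ r ∈ Ioi (0 : ℝ), ENNReal.ofReal r * (Ioc a b).indicator
      (fun r => ENNReal.ofReal (r ^ β)) r
        = (Ioc a b).indicator (fun r => ENNReal.ofReal (r ^ (β + 1))) r := fun r hr => by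
    by_cases h : r ∈ Ioc a b
    · rw [indicator_of_mem h, indicator_of_mem h, ← ENNReal.ofReal_mul (le_of_lt hr),
        rpow_add_one (ne_of_gt hr), mul_comm]
    · simp [h]
  rw [lintegral_comp_norm (by measurability), setLIntegral_congr_fun measurableSet_Ioi hpow,
    lintegral_indicator measurableSet_Ioc, Measure.restrict_restrict measurableSet_Ioc,
    inter_eq_left.2 hpos, intervalIntegral.integral_of_le hab,
    ENNReal.ofReal_mul (by positivity : 0 ≤ 2 * π),
    ofReal_integral_eq_lintegral_ofReal ((intervalIntegrable_iff_integrableOn_Ioc_of_le hab).1 hi)]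
  filter_upwards [ae_restrict_mem measurableSet_Ioc] with r hr
  exact rpow_nonneg (le_of_lt (hpos hr)) _

end Complex

theorem min_one_rpow_le_mul_rpow {s α : ℝ} (hs : 0 < s) (hα : -2 < α) :
    min s 1 ^ (α + 2) ≤ s * s ^ min (α + 1) 0 := by
  rcases le_total s 1 with h | h
  · rw [min_eq_left h, show α + 2 = (α + 1) + 1 by ring, rpow_add_one hs.ne', mul_comm]
    exact mul_le_mul_of_nonneg_left (rpow_le_rpow_of_exponent_ge hs h (min_le_left _ _)) hs.le
  · rw [min_eq_right h, one_rpow, mul_comm, ← rpow_add_one hs.ne', ← min_add_add_right]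
    exact one_le_rpow h (le_min (by linarith) (by norm_num))

theorem min_one_mul_rpow_le {s α : ℝ} (hs : 0 < s) :
    min s 1 * s ^ min α 0 ≤ s ^ min (α + 1) 0 := by
  rcases le_total s 1 with h | h
  · rw [min_eq_left h, mul_comm, ← rpow_add_one hs.ne', ← min_add_add_right]
    exact rpow_le_rpow_of_exponent_ge hs h (min_le_min_left _ (by norm_num))
  · rw [min_eq_right h, one_mul]
    exact rpow_le_rpow_of_exponent_le h (min_le_min_right _ (by linarith))

theorem max_one_rpow_sub_rpow_div_le {s p : ℝ} (hs : 0 < s) (hp : p ≠ 0) :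
    (max s 1 ^ p - s ^ p) / p ≤ s ^ min p 0 / |p| := by
  rcases hp.lt_or_gt with hp | hp
  · rw [min_eq_left hp.le, abs_of_neg hp, ← neg_div_neg_eq, neg_sub]
    exact div_le_div_of_nonneg_right
      (sub_le_self _ (rpow_nonneg (hs.le.trans (le_max_left _ _)) _)) (by linarith)
  · rw [min_eq_right hp.le, abs_of_pos hp, rpow_zero]
    refine div_le_div_of_nonneg_right ?_ hp.le
    rcases le_total s 1 with h | h
    · rw [max_eq_right h, one_rpow]
      linarith [rpow_nonneg hs.le p]
    · rw [max_eq_left h, sub_self]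
      exact zero_le_one

theorem div_two_rpow_le {t e : ℝ} (ht : 0 ≤ t) (he : -1 ≤ e) : (t / 2) ^ e ≤ 2 * t ^ e := by
  have h2 : (2 : ℝ)⁻¹ ≤ 2 ^ e := by
    simpa [rpow_neg_one] using rpow_le_rpow_of_exponent_le one_le_two he
  rw [div_rpow ht zero_le_two, div_le_iff₀ (by positivity)]
  nlinarith [rpow_nonneg ht e]

theorem rpow_le_rpow_min_zero {s x α : ℝ} (hs : 0 < s) (hsx : s ≤ x) (hx : x ≤ 1) :
    x ^ α ≤ s ^ min α 0 := by
  rcases le_total α 0 with hα | hα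
  · rw [min_eq_left hα]
    exact rpow_le_rpow_of_nonpos hs hsx hα
  · rw [min_eq_right hα, rpow_zero]
    exact rpow_le_one (hs.le.trans hsx) hx hα

theorem lintegral_indicator_rpow_norm_min_one_le {s α : ℝ} (hs : 0 < s) (hα : -2 < α) :
    ∫⁻ z : ℂ, (Ioc 0 (min s 1)).indicator (fun r => ENNReal.ofReal (r ^ α)) ‖z‖
      ≤ ENNReal.ofReal (2 * π / (α + 2) * (s * s ^ min (α + 1) 0)) := by
  rw [Complex.lintegral_indicator_rpow_norm le_rfl (by positivity)
      (intervalIntegral.intervalIntegrable_rpow' (by linarith)),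
    integral_rpow (Or.inl (by linarith)), show α + 1 + 1 = α + 2 by ring,
    zero_rpow (by linarith)]
  refine ENNReal.ofReal_le_ofReal ?_
  calc 2 * π * ((min s 1 ^ (α + 2) - 0) / (α + 2)) = 2 * π / (α + 2) * min s 1 ^ (α + 2) := by
        ring
    _ ≤ 2 * π / (α + 2) * (s * s ^ min (α + 1) 0) :=
        mul_le_mul_of_nonneg_left (min_one_rpow_le_mul_rpow hs hα)
          (div_nonneg (by positivity) (by linarith))

theorem lintegral_indicator_rpow_norm_max_one_le {s α : ℝ} (hs : 0 < s) (hα : α ≠ -1) :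
    ∫⁻ z : ℂ, (Ioc s (max s 1)).indicator (fun r => ENNReal.ofReal (r ^ (α - 1))) ‖z‖
      ≤ ENNReal.ofReal (2 * π / |α + 1| * s ^ min (α + 1) 0) := by
  have h0 : (0 : ℝ) ∉ uIcc s (max s 1) := by
    rw [uIcc_of_le (le_max_left _ _)]
    exact fun h => h.1.not_gt hs
  rw [Complex.lintegral_indicator_rpow_norm hs.le (le_max_left _ _)
      (intervalIntegral.intervalIntegrable_rpow (Or.inr h0)),
    integral_rpow (Or.inr ⟨by simpa using hα, h0⟩), show α - 1 + 1 + 1 = α + 1 by ring]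
  refine ENNReal.ofReal_le_ofReal ?_
  calc 2 * π * ((max s 1 ^ (α + 1) - s ^ (α + 1)) / (α + 1))
      ≤ 2 * π * (s ^ min (α + 1) 0 / |α + 1|) :=
        mul_le_mul_of_nonneg_left
          (max_one_rpow_sub_rpow_div_le hs fun h => hα (by linarith)) (by positivity)
    _ = 2 * π / |α + 1| * s ^ min (α + 1) 0 := by ring

theorem ofReal_le_ofReal_mul_indicator_rpow {x c r β : ℝ} {S : Set ℝ} (hr : r ∈ S) (hc : 0 ≤ c)
    (h : x ≤ c * r ^ β) :
    ENNReal.ofReal x ≤ ENNReal.ofReal c * S.indicator (fun r => ENNReal.ofReal (r ^ β)) r := by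
  rw [indicator_of_mem hr, ← ENNReal.ofReal_mul hc]
  exact ENNReal.ofReal_le_ofReal h

/-- With `s = ‖ζ‖ / 2`, the three terms dominate the Cauchy integrand on `‖z‖ ≤ s`, on
`‖z - ζ‖ ≤ s < ‖z‖`, and on the rest of the unit disc. -/
noncomputable def cauchyMajorant (α k s : ℝ) (ζ z : ℂ) : ℝ≥0∞ :=
  ENNReal.ofReal (k / s) * (Ioc 0 (min s 1)).indicator (fun r => ENNReal.ofReal (r ^ α)) ‖z‖
    + ENNReal.ofReal (k * s ^ min α 0) *
        (Ioc 0 (min s 1)).indicator (fun r => ENNReal.ofReal (r ^ (-1 : ℝ))) ‖z - ζ‖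
    + ENNReal.ofReal (3 * k) *
        (Ioc s (max s 1)).indicator (fun r => ENNReal.ofReal (r ^ (α - 1))) ‖z‖

theorem ofReal_norm_div_sub_le_cauchyMajorant {α k s : ℝ} {f : ℂ → ℂ} {ζ z : ℂ} (hk : 0 ≤ k)
    (hs : ‖ζ‖ = 2 * s) (hsupp : ∀ z : ℂ, 1 < ‖z‖ → f z = 0)
    (hf : ∀ z : ℂ, z ≠ 0 → ‖f z‖ ≤ k * ‖z‖ ^ α) (hz : z ≠ 0) :
    ENNReal.ofReal ‖f z / (z - ζ)‖ ≤ cauchyMajorant α k s ζ z := by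
  rcases lt_or_ge 1 ‖z‖ with hz1 | hz1
  · simp [hsupp z hz1]
  have hzpos : 0 < ‖z‖ := norm_pos_iff.2 hz
  have hfz := hf z hz
  rw [cauchyMajorant]
  rcases le_or_gt ‖z‖ s with hzs | hzs
  · have hspos : 0 < s := hzpos.trans_le hzs
    have hdist : s ≤ ‖z - ζ‖ := by
      have := norm_sub_norm_le ζ z
      rw [norm_sub_rev] at this
      linarith
    refine le_add_right (le_add_right (ofReal_le_ofReal_mul_indicator_rpow
      ⟨hzpos, le_min hzs hz1⟩ (by positivity) ?_))
    calc ‖f z / (z - ζ)‖ ≤ k * ‖z‖ ^ α / s := by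
          rw [norm_div]; exact div_le_div₀ (by positivity) hfz hspos hdist
      _ = k / s * ‖z‖ ^ α := by ring
  rcases le_or_gt ‖z - ζ‖ s with hzζ | hzζ
  · rcases eq_or_ne z ζ with rfl | hne
    · simp
    have hzζpos : 0 < ‖z - ζ‖ := norm_pos_iff.2 (sub_ne_zero.2 hne)
    have hspos : 0 < s := hzζpos.trans_le hzζ
    refine le_add_right (le_add_left (ofReal_le_ofReal_mul_indicator_rpow
      ⟨hzζpos, le_min hzζ (hzζ.trans (hzs.le.trans hz1))⟩ (by positivity) ?_))
    rw [norm_div, rpow_neg_one, ← div_eq_mul_inv]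
    gcongr
    exact hfz.trans (mul_le_mul_of_nonneg_left (rpow_le_rpow_min_zero hspos hzs.le hz1) hk)
  · have hfar : ‖z‖ ≤ 3 * ‖z - ζ‖ := by
      have := norm_le_norm_sub_add z ζ
      linarith
    refine le_add_left (ofReal_le_ofReal_mul_indicator_rpow
      ⟨hzs, hz1.trans (le_max_right _ _)⟩ (by positivity) ?_)
    calc ‖f z / (z - ζ)‖ ≤ k * ‖z‖ ^ α / (‖z‖ / 3) := by
          rw [norm_div]; exact div_le_div₀ (by positivity) hfz (by positivity) (by linarith)
      _ = 3 * k * ‖z‖ ^ (α - 1) := by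
          rw [rpow_sub_one hzpos.ne']; field_simp

theorem lintegral_cauchyMajorant_le {α k s : ℝ} (ζ : ℂ) (hα : -2 < α) (hα' : α ≠ -1)
    (hk : 0 ≤ k) (hs : 0 < s) :
    ∫⁻ z, cauchyMajorant α k s ζ z
      ≤ ENNReal.ofReal (2 * π * k * (1 / (α + 2) + 1 + 3 / |α + 1|) * s ^ min (α + 1) 0) := by
  have hα2 : 0 < α + 2 := by linarith
  have hnear : ∫⁻ z : ℂ, (Ioc 0 (min s 1)).indicator
      (fun r => ENNReal.ofReal (r ^ (-1 : ℝ))) ‖z - ζ‖ = ENNReal.ofReal (2 * π * min s 1) := by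
    rw [lintegral_sub_right_eq_self (fun z => (Ioc 0 (min s 1)).indicator
      (fun r => ENNReal.ofReal (r ^ (-1 : ℝ))) ‖z‖) ζ,
      Complex.lintegral_indicator_rpow_norm le_rfl (by positivity) (by simp)]
    simp
  unfold cauchyMajorant
  rw [lintegral_add_left (by measurability), lintegral_add_left (by measurability),
    lintegral_const_mul _ (by measurability), lintegral_const_mul _ (by measurability),
    lintegral_const_mul _ (by measurability), hnear]
  calc _ ≤ ENNReal.ofReal (k / s) * ENNReal.ofReal (2 * π / (α + 2) * (s * s ^ min (α + 1) 0))
          + ENNReal.ofReal (k * s ^ min α 0) * ENNReal.ofReal (2 * π * min s 1)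
          + ENNReal.ofReal (3 * k) * ENNReal.ofReal (2 * π / |α + 1| * s ^ min (α + 1) 0) := by
        gcongr
        · exact lintegral_indicator_rpow_norm_min_one_le hs hα
        · exact lintegral_indicator_rpow_norm_max_one_le hs hα'
    _ = ENNReal.ofReal (k / s * (2 * π / (α + 2) * (s * s ^ min (α + 1) 0))
          + k * s ^ min α 0 * (2 * π * min s 1)
          + 3 * k * (2 * π / |α + 1| * s ^ min (α + 1) 0)) := by
        rw [← ENNReal.ofReal_mul (by positivity), ← ENNReal.ofReal_mul (by positivity),
          ← ENNReal.ofReal_mul (by positivity), ← ENNReal.ofReal_add (by positivity)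
          (by positivity), ← ENNReal.ofReal_add (by positivity) (by positivity)]
    _ ≤ _ := by
        refine ENNReal.ofReal_le_ofReal ?_
        have hmid := mul_le_mul_of_nonneg_left (min_one_mul_rpow_le (α := α) hs)
          (by positivity : 0 ≤ 2 * π * k)
        have hfirst : k / s * (2 * π / (α + 2) * (s * s ^ min (α + 1) 0))
            = 2 * π * k / (α + 2) * s ^ min (α + 1) 0 := by
          field_simp
        rw [hfirst]
        linear_combination hmid

/-- Weighted bound for the Cauchy transform:
for `α > -2`, `α ≠ -1`, there is a constant `C` depending only on `α` such that for any
`R ≤ 1`, any `k ≥ 0` and any measurable `f` supported in `B(0,R)` with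
`‖f z‖ ≤ k * ‖z‖ ^ α`, the Cauchy transform
`K(f)(ζ) = (1/(2πi)) ∫ f(z)/(z-ζ) dz∧dz̄ = -(1/π) ∫ f(z)/(z-ζ) dA(z)`
satisfies `‖K(f)(ζ)‖ ≤ C * k * ‖ζ‖ ^ min (α+1) 0` for every `ζ ≠ 0`. -/
theorem cauchy_transform_weighted_bound (α : ℝ) (hα : -2 < α) (hα' : α ≠ -1) :
    ∃ C > (0:ℝ), ∀ (R k : ℝ), 0 < R → R ≤ 1 → 0 ≤ k →
      ∀ f : ℂ → ℂ, AEStronglyMeasurable f volume →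
        (∀ z : ℂ, R < ‖z‖ → f z = 0) →
        (∀ z : ℂ, z ≠ 0 → ‖f z‖ ≤ k * ‖z‖ ^ α) →
        ∀ ζ : ℂ, ζ ≠ 0 →
          ‖(-(Real.pi)⁻¹ : ℝ) • ∫ z : ℂ, f z / (z - ζ)‖
            ≤ C * k * ‖ζ‖ ^ min (α + 1) 0 := by
  have hα2 : 0 < α + 2 := by linarith
  have hα1 : 0 < |α + 1| := abs_pos.2 fun h => hα' (by linarith)
  refine ⟨4 * (1 / (α + 2) + 1 + 3 / |α + 1|), by positivity, ?_⟩
  intro R k _ hR1 hk f _ hsupp hf ζ hζ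
  have hs : 0 < ‖ζ‖ / 2 := by positivity
  set B := 2 * π * k * (1 / (α + 2) + 1 + 3 / |α + 1|) * (‖ζ‖ / 2) ^ min (α + 1) 0 with hB
  have hlint : ∫⁻ z, ENNReal.ofReal ‖f z / (z - ζ)‖ ≤ ENNReal.ofReal B := by
    refine (lintegral_mono_ae ?_).trans (lintegral_cauchyMajorant_le ζ hα hα' hk hs)
    filter_upwards [Measure.ae_ne volume 0] with z hz
    exact ofReal_norm_div_sub_le_cauchyMajorant hk (by ring)
      (fun z hz => hsupp z (hR1.trans_lt hz)) hf hz
  have hint : ‖∫ z : ℂ, f z / (z - ζ)‖ ≤ B :=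
    (norm_integral_le_lintegral_norm _).trans (ENNReal.toReal_le_of_le_ofReal (by positivity) hlint)
  calc ‖(-π⁻¹ : ℝ) • ∫ z : ℂ, f z / (z - ζ)‖ = π⁻¹ * ‖∫ z : ℂ, f z / (z - ζ)‖ := by
        rw [norm_smul, norm_neg, norm_inv, norm_of_nonneg pi_pos.le]
    _ ≤ π⁻¹ * B := by gcongr
    _ = 2 * k * (1 / (α + 2) + 1 + 3 / |α + 1|) * (‖ζ‖ / 2) ^ min (α + 1) 0 := by
        rw [hB]; field_simp
    _ ≤ 2 * k * (1 / (α + 2) + 1 + 3 / |α + 1|) * (2 * ‖ζ‖ ^ min (α + 1) 0) := by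
        gcongr
        exact div_two_rpow_le (norm_nonneg ζ) (le_min (by linarith) (by norm_num))
    _ = 4 * (1 / (α + 2) + 1 + 3 / |α + 1|) * k * ‖ζ‖ ^ min (α + 1) 0 := by ring
end

section
/- Let α > -1 with α ≠ 0, and let f be a measurable function on ℂ supported in B(0,R), R ≤ 1, with |f(z)| ≤ k|z|^α. Then the modified Cauchy transform C(f)(ζ) = K(f)(ζ) - K(f)(0) satisfies |C(f)(ζ)| ≤ C'·k·|ζ|^{min(α+1,1)} for all ζ, where C' depends only on α. -/
/-!
Since `1 / (z - ζ) - 1 / z = ζ / (z (z - ζ))`, the claim reduces to bounding the integral of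
`|z| ^ (α - 1) * |z - ζ|⁻¹` over the support of `f`. Both factors decrease in the respective
distance, so the integrand is dominated by `φ (min |z| |z - ζ|) ≤ φ |z| + φ |z - ζ|` for a radial
profile `φ`, and translation invariance plus polar coordinates turn this into a one-dimensional
integral. For `α > 0` the profile `r ^ (min (α - 1) 0 - 1)` on `r ≤ 1` is integrable, uniformly
in `ζ`. For `α < 0` we use `max |z| |z - ζ| ≥ |ζ| / 2`: the profile `r ^ (α - 1) / max r (|ζ| / 2)`
is integrable over the whole plane, with integral a multiple of `|ζ| ^ α`.
-/

open MeasureTheory Set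
open scoped ENNReal

lemma lintegral_Ioc_rpow {a b : ℝ} (ha : -1 < a) (hb : 0 ≤ b) :
    ∫⁻ r in Ioc 0 b, ENNReal.ofReal (r ^ a) = ENNReal.ofReal (b ^ (a + 1) / (a + 1)) := by
  have hint : IntegrableOn (fun r : ℝ => r ^ a) (Ioc 0 b) := by
    rw [← intervalIntegrable_iff_integrableOn_Ioc_of_le hb]
    exact intervalIntegral.intervalIntegrable_rpow' ha
  rw [← ofReal_integral_eq_lintegral_ofReal hint
      ((ae_restrict_iff' measurableSet_Ioc).2 (.of_forall fun r hr => Real.rpow_nonneg hr.1.le _)),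
    ← intervalIntegral.integral_of_le hb, integral_rpow (.inl ha),
    Real.zero_rpow (by linarith), sub_zero]

lemma lintegral_Ioi_rpow {a c : ℝ} (ha : a < -1) (hc : 0 < c) :
    ∫⁻ r in Ioi c, ENNReal.ofReal (r ^ a) = ENNReal.ofReal (-c ^ (a + 1) / (a + 1)) := by
  rw [← ofReal_integral_eq_lintegral_ofReal (integrableOn_Ioi_rpow_of_lt ha hc)
      ((ae_restrict_iff' measurableSet_Ioi).2
        (.of_forall fun r hr => Real.rpow_nonneg (hc.trans hr).le _)),
    integral_Ioi_rpow_of_lt ha hc]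

lemma lintegral_comp_norm (φ : ℝ → ℝ≥0∞) (hφ : Measurable φ) :
    ∫⁻ z : ℂ, φ ‖z‖ = 2 * ENNReal.ofReal Real.pi * ∫⁻ r in Ioi 0, ENNReal.ofReal r * φ r := by
  have htarget : polarCoord.target = Ioi (0 : ℝ) ×ˢ Ioo (-Real.pi) Real.pi := rfl
  rw [← Complex.lintegral_comp_polarCoord_symm, htarget,
    setLIntegral_congr_fun (g := fun p => ENNReal.ofReal p.1 * φ p.1)
      (measurableSet_Ioi.prod measurableSet_Ioo)
      (fun p hp => by simp [abs_of_pos (mem_Ioi.mp hp.1)]),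
    Measure.volume_eq_prod, ← Measure.prod_restrict, lintegral_prod _ (by fun_prop)]
  simp only [lintegral_const, Measure.restrict_apply_univ, Real.volume_Ioo]
  rw [lintegral_mul_const _ (by fun_prop), mul_comm, sub_neg_eq_add, ← two_mul,
    ENNReal.ofReal_mul zero_le_two, ENNReal.ofReal_ofNat]

lemma lintegral_indicator_rpow_norm {s : ℝ} (hs : -2 < s) :
    ∫⁻ z : ℂ, (Iic 1).indicator (fun r => ENNReal.ofReal (r ^ s)) ‖z‖ =
      ENNReal.ofReal (2 * Real.pi / (s + 2)) := by
  have hprofile : EqOn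
      (fun r => ENNReal.ofReal r * (Iic 1).indicator (fun r => ENNReal.ofReal (r ^ s)) r)
      ((Iic 1).indicator fun r => ENNReal.ofReal (r ^ (s + 1))) (Ioi 0) := fun r hr => by
    by_cases hr1 : r ∈ Iic (1 : ℝ)
    · simp only [indicator_of_mem hr1, ← ENNReal.ofReal_mul hr.out.le,
        Real.rpow_add_one hr.out.ne', mul_comm]
    · simp [indicator_of_notMem hr1]
  rw [lintegral_comp_norm _ ((by fun_prop : Measurable _).indicator measurableSet_Iic),
    setLIntegral_congr_fun measurableSet_Ioi hprofile, lintegral_indicator measurableSet_Iic,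
    Measure.restrict_restrict measurableSet_Iic, Iic_inter_Ioi,
    lintegral_Ioc_rpow (by linarith) zero_le_one, Real.one_rpow, ← ENNReal.ofReal_ofNat 2,
    ← ENNReal.ofReal_mul zero_le_two, ← ENNReal.ofReal_mul (by positivity)]
  congr 1
  rw [show s + 1 + 1 = s + 2 by ring]
  ring

lemma lintegral_rpow_mul_inv_max_norm {α u : ℝ} (hα : -1 < α) (hα0 : α < 0) (hu : 0 < u) :
    ∫⁻ z : ℂ, ENNReal.ofReal (‖z‖ ^ (α - 1) * (max ‖z‖ u)⁻¹) =
      ENNReal.ofReal (2 * Real.pi * (1 / (α + 1) - 1 / α) * u ^ α) := by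
  have hnear : EqOn (fun r => ENNReal.ofReal r * ENNReal.ofReal (r ^ (α - 1) * (max r u)⁻¹))
      (fun r => ENNReal.ofReal u⁻¹ * ENNReal.ofReal (r ^ α)) (Ioc 0 u) := fun r hr => by
    have hr0 : r ≠ 0 := hr.1.ne'
    simp only [max_eq_right hr.2, ← ENNReal.ofReal_mul hr.1.le,
      ← ENNReal.ofReal_mul (inv_nonneg.2 hu.le), Real.rpow_sub_one hr0]
    field_simp
  have hfar : EqOn (fun r => ENNReal.ofReal r * ENNReal.ofReal (r ^ (α - 1) * (max r u)⁻¹))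
      (fun r => ENNReal.ofReal (r ^ (α - 1))) (Ioi u) := fun r hr => by
    have hr0 : 0 < r := hu.trans hr
    simp only [max_eq_left (mem_Ioi.1 hr).le, ← ENNReal.ofReal_mul hr0.le]
    field_simp
  rw [lintegral_comp_norm (fun r => ENNReal.ofReal (r ^ (α - 1) * (max r u)⁻¹)) (by fun_prop),
    ← Ioc_union_Ioi_eq_Ioi hu.le,
    lintegral_union measurableSet_Ioi (Ioc_disjoint_Ioi le_rfl),
    setLIntegral_congr_fun measurableSet_Ioc hnear, setLIntegral_congr_fun measurableSet_Ioi hfar,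
    lintegral_const_mul _ (by fun_prop), lintegral_Ioc_rpow hα hu.le,
    lintegral_Ioi_rpow (by linarith) hu, sub_add_cancel,
    ← ENNReal.ofReal_mul (inv_nonneg.2 hu.le),
    ← ENNReal.ofReal_add
      (mul_nonneg (inv_nonneg.2 hu.le) (div_nonneg (Real.rpow_nonneg hu.le _) (by linarith)))
      (div_nonneg_of_nonpos (neg_nonpos.2 (Real.rpow_nonneg hu.le _)) (by linarith)),
    ← ENNReal.ofReal_ofNat 2, ← ENNReal.ofReal_mul zero_le_two,
    ← ENNReal.ofReal_mul (by positivity)]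
  congr 1
  rw [Real.rpow_add_one hu.ne']
  field_simp
  ring

lemma rpow_mul_inv_le_min_rpow {e x y : ℝ} (hx : 0 < x) (hx1 : x ≤ 1) (hy : 0 < y) :
    x ^ e * y⁻¹ ≤ min x y ^ (min e 0 - 1) := by
  have hm : 0 < min x y := lt_min hx hy
  calc x ^ e * y⁻¹ ≤ x ^ min e 0 * y⁻¹ :=
        mul_le_mul_of_nonneg_right (Real.rpow_le_rpow_of_exponent_ge hx hx1 (min_le_left e 0))
          (inv_nonneg.2 hy.le)
    _ ≤ min x y ^ min e 0 * (min x y)⁻¹ :=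
        mul_le_mul (Real.rpow_le_rpow_of_nonpos hm (min_le_left x y) (min_le_right e 0))
          (inv_anti₀ hm (min_le_right x y)) (inv_nonneg.2 hy.le) (Real.rpow_nonneg hm.le _)
    _ = min x y ^ (min e 0 - 1) := by rw [Real.rpow_sub_one hm.ne', div_eq_mul_inv]

lemma rpow_sub_one_mul_inv_le {α x y u : ℝ} (hα : α < 0) (hx : 0 < x) (hy : 0 < y)
    (hu : u ≤ max x y) :
    x ^ (α - 1) * y⁻¹ ≤ min x y ^ (α - 1) * (max (min x y) u)⁻¹ := by
  have hm : 0 < min x y := lt_min hx hy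
  have hmax : x ^ (α - 1) * y⁻¹ ≤ min x y ^ (α - 1) * (max x y)⁻¹ := by
    rcases le_total x y with hxy | hyx
    · rw [min_eq_left hxy, max_eq_right hxy]
    · rw [min_eq_right hyx, max_eq_left hyx, Real.rpow_sub_one hx.ne', Real.rpow_sub_one hy.ne']
      have : x ^ α ≤ y ^ α := Real.rpow_le_rpow_of_nonpos hy hyx hα.le
      calc x ^ α / x * y⁻¹ = x ^ α * (x * y)⁻¹ := by ring
        _ ≤ y ^ α * (x * y)⁻¹ := by gcongr
        _ = y ^ α / y * x⁻¹ := by ring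
  refine hmax.trans (mul_le_mul_of_nonneg_left ?_ (Real.rpow_nonneg hm.le _))
  exact inv_anti₀ (hm.trans_le (le_max_left _ _)) (max_le min_le_max hu)

lemma lintegral_le_two_mul_of_le_comp_min {g : ℂ → ℝ≥0∞} {φ : ℝ → ℝ≥0∞} (hφ : Measurable φ)
    (c : ℂ) (h : ∀ᵐ z, g z ≤ φ (min ‖z‖ ‖z - c‖)) :
    ∫⁻ z, g z ≤ 2 * ∫⁻ z : ℂ, φ ‖z‖ := by
  have hsum : ∀ᵐ z, g z ≤ φ ‖z‖ + φ ‖z - c‖ := h.mono fun z hz => by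
    rcases min_choice ‖z‖ ‖z - c‖ with hmin | hmin <;> rw [hmin] at hz
    exacts [hz.trans le_self_add, hz.trans le_add_self]
  calc ∫⁻ z, g z ≤ ∫⁻ z, φ ‖z‖ + φ ‖z - c‖ := lintegral_mono_ae hsum
    _ = 2 * ∫⁻ z : ℂ, φ ‖z‖ := by
      rw [lintegral_add_left (by fun_prop), lintegral_sub_right_eq_self (fun z => φ ‖z‖) c,
        two_mul]

lemma lintegral_enorm_div_sub_le {e k : ℝ} (he : -1 < e) (hk : 0 ≤ k) {h : ℂ → ℂ}
    (hsupp : ∀ z, 1 < ‖z‖ → h z = 0) (hbound : ∀ z, z ≠ 0 → ‖h z‖ ≤ k * ‖z‖ ^ e) (w : ℂ) :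
    ∫⁻ z, ‖h z / (z - w)‖ₑ ≤ ENNReal.ofReal (k * (4 * Real.pi / (min e 0 + 1))) := by
  set φ : ℝ → ℝ≥0∞ := (Iic 1).indicator fun r => ENNReal.ofReal (r ^ (min e 0 - 1))
  have hpt : ∀ᵐ z, ‖h z / (z - w)‖ₑ ≤ ENNReal.ofReal k * φ (min ‖z‖ ‖z - w‖) := by
    filter_upwards [Measure.ae_ne volume 0, Measure.ae_ne volume w] with z hz0 hzw
    rcases le_or_gt ‖z‖ 1 with hz1 | hz1
    · simp only [φ]
      rw [indicator_of_mem (mem_Iic.2 ((min_le_left _ _).trans hz1)), ← ENNReal.ofReal_mul hk,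
        ← ofReal_norm]
      refine ENNReal.ofReal_le_ofReal ?_
      calc ‖h z / (z - w)‖ = ‖h z‖ * ‖z - w‖⁻¹ := by rw [norm_div, div_eq_mul_inv]
        _ ≤ k * ‖z‖ ^ e * ‖z - w‖⁻¹ := by gcongr; exact hbound z hz0
        _ ≤ k * min ‖z‖ ‖z - w‖ ^ (min e 0 - 1) := by
          rw [mul_assoc]
          exact mul_le_mul_of_nonneg_left (rpow_mul_inv_le_min_rpow (norm_pos_iff.2 hz0) hz1
            (norm_pos_iff.2 (sub_ne_zero.2 hzw))) hk
    · simp [hsupp z hz1]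
  calc ∫⁻ z, ‖h z / (z - w)‖ₑ
      ≤ 2 * ∫⁻ z : ℂ, ENNReal.ofReal k * φ ‖z‖ :=
        lintegral_le_two_mul_of_le_comp_min
          (((by fun_prop : Measurable _).indicator measurableSet_Iic).const_mul _) w hpt
    _ = ENNReal.ofReal (k * (4 * Real.pi / (min e 0 + 1))) := by
      have hs : -2 < min e 0 - 1 := by have := lt_min he neg_one_lt_zero; linarith
      rw [lintegral_const_mul' _ _ ENNReal.ofReal_ne_top, lintegral_indicator_rpow_norm hs,
        ← ENNReal.ofReal_mul hk, ← ENNReal.ofReal_ofNat 2, ← ENNReal.ofReal_mul zero_le_two]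
      congr 1
      rw [show min e 0 - 1 + 2 = min e 0 + 1 by ring]
      ring

lemma lintegral_enorm_div_sub_le_of_neg {α k : ℝ} (hα : -1 < α) (hα0 : α < 0) (hk : 0 ≤ k)
    {h : ℂ → ℂ} (hbound : ∀ z, z ≠ 0 → ‖h z‖ ≤ k * ‖z‖ ^ (α - 1)) {w : ℂ} (hw : w ≠ 0) :
    ∫⁻ z, ‖h z / (z - w)‖ₑ ≤
      ENNReal.ofReal (k * (4 * Real.pi * (1 / (α + 1) - 1 / α) * (‖w‖ / 2) ^ α)) := by
  have hpt : ∀ᵐ z, ‖h z / (z - w)‖ₑ ≤ ENNReal.ofReal k *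
      ENNReal.ofReal (min ‖z‖ ‖z - w‖ ^ (α - 1) * (max (min ‖z‖ ‖z - w‖) (‖w‖ / 2))⁻¹) := by
    filter_upwards [Measure.ae_ne volume 0, Measure.ae_ne volume w] with z hz0 hzw
    have hu : ‖w‖ / 2 ≤ max ‖z‖ ‖z - w‖ := by
      have := norm_sub_le z (z - w)
      rw [sub_sub_cancel] at this
      linarith [le_max_left ‖z‖ ‖z - w‖, le_max_right ‖z‖ ‖z - w‖]
    rw [← ENNReal.ofReal_mul hk, ← ofReal_norm]
    refine ENNReal.ofReal_le_ofReal ?_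
    calc ‖h z / (z - w)‖ = ‖h z‖ * ‖z - w‖⁻¹ := by rw [norm_div, div_eq_mul_inv]
      _ ≤ k * ‖z‖ ^ (α - 1) * ‖z - w‖⁻¹ := by gcongr; exact hbound z hz0
      _ ≤ _ := by
        rw [mul_assoc]
        exact mul_le_mul_of_nonneg_left (rpow_sub_one_mul_inv_le hα0 (norm_pos_iff.2 hz0)
          (norm_pos_iff.2 (sub_ne_zero.2 hzw)) hu) hk
  calc ∫⁻ z, ‖h z / (z - w)‖ₑ
      ≤ 2 * ∫⁻ z : ℂ,
          ENNReal.ofReal k * ENNReal.ofReal (‖z‖ ^ (α - 1) * (max ‖z‖ (‖w‖ / 2))⁻¹) :=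
        lintegral_le_two_mul_of_le_comp_min
          (φ := fun r => ENNReal.ofReal k * ENNReal.ofReal (r ^ (α - 1) * (max r (‖w‖ / 2))⁻¹))
          (by fun_prop) w hpt
    _ = _ := by
      rw [lintegral_const_mul' _ _ ENNReal.ofReal_ne_top,
        lintegral_rpow_mul_inv_max_norm hα hα0 (by positivity),
        ← ENNReal.ofReal_mul hk, ← ENNReal.ofReal_ofNat 2, ← ENNReal.ofReal_mul zero_le_two]
      congr 1
      ring

section CauchyTransform

variable {α k : ℝ} {f : ℂ → ℂ}

lemma integrable_div_sub (hα : -1 < α) (hk : 0 ≤ k) (hfm : AEStronglyMeasurable f volume)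
    (hsupp : ∀ z, 1 < ‖z‖ → f z = 0) (hbound : ∀ z, z ≠ 0 → ‖f z‖ ≤ k * ‖z‖ ^ α) (w : ℂ) :
    Integrable (fun z => f z / (z - w)) :=
  ⟨hfm.div₀ (by fun_prop),
    (lintegral_enorm_div_sub_le hα hk hsupp hbound w).trans_lt ENNReal.ofReal_lt_top⟩

lemma norm_mul_div_le_rpow_sub_one (hbound : ∀ z, z ≠ 0 → ‖f z‖ ≤ k * ‖z‖ ^ α) (ζ : ℂ) :
    ∀ z, z ≠ 0 → ‖ζ * f z / z‖ ≤ k * ‖ζ‖ * ‖z‖ ^ (α - 1) := fun z hz => by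
  have hz' : 0 < ‖z‖ := norm_pos_iff.2 hz
  rw [norm_div, norm_mul, Real.rpow_sub_one hz'.ne', div_le_iff₀ hz']
  calc ‖ζ‖ * ‖f z‖ ≤ ‖ζ‖ * (k * ‖z‖ ^ α) := by gcongr; exact hbound z hz
    _ = k * ‖ζ‖ * (‖z‖ ^ α / ‖z‖) * ‖z‖ := by field_simp

lemma cauchy_sub_cauchy_zero_eq (hα : -1 < α) (hk : 0 ≤ k) (hfm : AEStronglyMeasurable f volume)
    (hsupp : ∀ z, 1 < ‖z‖ → f z = 0) (hbound : ∀ z, z ≠ 0 → ‖f z‖ ≤ k * ‖z‖ ^ α) (ζ : ℂ) :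
    ((∫ z : ℂ, f z / (z - ζ)) - ∫ z : ℂ, f z / (z - 0)) = ∫ z : ℂ, ζ * f z / z / (z - ζ) := by
  rw [← integral_sub (integrable_div_sub hα hk hfm hsupp hbound ζ)
    (integrable_div_sub hα hk hfm hsupp hbound 0)]
  refine integral_congr_ae ?_
  filter_upwards [Measure.ae_ne volume 0, Measure.ae_ne volume ζ] with z hz0 hzζ
  have : z - ζ ≠ 0 := sub_ne_zero.2 hzζ
  field_simp
  ring

noncomputable def modifiedCauchyTransform (f : ℂ → ℂ) (ζ : ℂ) : ℂ :=
  ((-(Real.pi)⁻¹ : ℝ) • ∫ z : ℂ, f z / (z - ζ)) - ((-(Real.pi)⁻¹ : ℝ) • ∫ z : ℂ, f z / (z - 0))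

lemma norm_modifiedCauchyTransform_le {B : ℝ} (hα : -1 < α) (hk : 0 ≤ k)
    (hfm : AEStronglyMeasurable f volume) (hsupp : ∀ z, 1 < ‖z‖ → f z = 0)
    (hbound : ∀ z, z ≠ 0 → ‖f z‖ ≤ k * ‖z‖ ^ α) (ζ : ℂ) (hB : 0 ≤ B)
    (hkernel : ∫⁻ z, ‖ζ * f z / z / (z - ζ)‖ₑ ≤ ENNReal.ofReal B) :
    ‖modifiedCauchyTransform f ζ‖ ≤ Real.pi⁻¹ * B := by
  rw [modifiedCauchyTransform, ← smul_sub, cauchy_sub_cauchy_zero_eq hα hk hfm hsupp hbound,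
    norm_smul, norm_neg, Real.norm_of_nonneg (inv_nonneg.2 Real.pi_pos.le)]
  refine mul_le_mul_of_nonneg_left ?_ (inv_nonneg.2 Real.pi_pos.le)
  rw [← ENNReal.ofReal_le_ofReal_iff hB, ofReal_norm]
  exact (enorm_integral_le_lintegral_enorm _).trans hkernel

lemma norm_modifiedCauchyTransform_le_of_neg (hα : -1 < α) (hα0 : α < 0) (hk : 0 ≤ k)
    (hfm : AEStronglyMeasurable f volume) (hsupp : ∀ z, 1 < ‖z‖ → f z = 0)
    (hbound : ∀ z, z ≠ 0 → ‖f z‖ ≤ k * ‖z‖ ^ α) (ζ : ℂ) :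
    ‖modifiedCauchyTransform f ζ‖ ≤ 4 * (1 / (α + 1) - 1 / α) / 2 ^ α * k * ‖ζ‖ ^ (α + 1) := by
  rcases eq_or_ne ζ 0 with rfl | hζ
  · simp [modifiedCauchyTransform, Real.zero_rpow (show α + 1 ≠ 0 by linarith)]
  have hζ' : 0 < ‖ζ‖ := norm_pos_iff.2 hζ
  have hc : 0 < 1 / (α + 1) - 1 / α := by
    linarith [one_div_pos.2 (show 0 < α + 1 by linarith), one_div_neg.2 hα0]
  refine (norm_modifiedCauchyTransform_le hα hk hfm hsupp hbound ζ (by positivity)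
    (lintegral_enorm_div_sub_le_of_neg hα hα0 (by positivity)
      (norm_mul_div_le_rpow_sub_one hbound ζ) hζ)).trans_eq ?_
  rw [Real.rpow_add_one hζ'.ne', Real.div_rpow hζ'.le zero_le_two]
  field_simp

lemma norm_modifiedCauchyTransform_le_of_pos (hα : 0 < α) (hk : 0 ≤ k)
    (hfm : AEStronglyMeasurable f volume) (hsupp : ∀ z, 1 < ‖z‖ → f z = 0)
    (hbound : ∀ z, z ≠ 0 → ‖f z‖ ≤ k * ‖z‖ ^ α) (ζ : ℂ) :
    ‖modifiedCauchyTransform f ζ‖ ≤ 4 / (min (α - 1) 0 + 1) * k * ‖ζ‖ := by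
  have hm : 0 < min (α - 1) 0 + 1 := by
    linarith [lt_min (show -1 < α - 1 by linarith) neg_one_lt_zero]
  have hsuppζ : ∀ z, 1 < ‖z‖ → ζ * f z / z = 0 := fun z hz => by simp [hsupp z hz]
  refine (norm_modifiedCauchyTransform_le (by linarith) hk hfm hsupp hbound ζ (by positivity)
    (lintegral_enorm_div_sub_le (by linarith) (by positivity) hsuppζ
      (norm_mul_div_le_rpow_sub_one hbound ζ) ζ)).trans_eq ?_
  field_simp

end CauchyTransform

/-- Weighted bound for the modified Cauchy transform `C(f)(ζ) = K(f)(ζ) - K(f)(0)`: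
for `α > -1`, `α ≠ 0`, there is a constant `C'` depending only on `α` such that for any
`R ≤ 1`, `k ≥ 0`, and measurable `f` supported in `B(0,R)` with `‖f z‖ ≤ k * ‖z‖ ^ α`,
one has `‖C(f)(ζ)‖ ≤ C' * k * ‖ζ‖ ^ min (α+1) 1` for all `ζ`. -/
theorem modified_cauchy_transform_weighted_bound (α : ℝ) (hα : -1 < α) (hα' : α ≠ 0) :
    ∃ C' > (0:ℝ), ∀ (R k : ℝ), 0 < R → R ≤ 1 → 0 ≤ k →
      ∀ f : ℂ → ℂ, AEStronglyMeasurable f volume →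
        (∀ z : ℂ, R < ‖z‖ → f z = 0) →
        (∀ z : ℂ, z ≠ 0 → ‖f z‖ ≤ k * ‖z‖ ^ α) →
        ∀ ζ : ℂ,
          ‖((-(Real.pi)⁻¹ : ℝ) • ∫ z : ℂ, f z / (z - ζ)) -
            ((-(Real.pi)⁻¹ : ℝ) • ∫ z : ℂ, f z / (z - 0))‖
            ≤ C' * k * ‖ζ‖ ^ min (α + 1) 1 := by
  rcases hα'.lt_or_gt with hneg | hpos
  · have hc : 0 < 1 / (α + 1) - 1 / α := by
      linarith [one_div_pos.2 (show 0 < α + 1 by linarith), one_div_neg.2 hneg]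
    refine ⟨4 * (1 / (α + 1) - 1 / α) / 2 ^ α, by positivity,
      fun R k _ hR hk f hfm hsupp hbound ζ => ?_⟩
    rw [min_eq_left (by linarith)]
    exact norm_modifiedCauchyTransform_le_of_neg hα hneg hk hfm
      (fun z hz => hsupp z (hR.trans_lt hz)) hbound ζ
  · have hm : 0 < min (α - 1) 0 + 1 := by
      linarith [lt_min (show -1 < α - 1 by linarith) neg_one_lt_zero]
    refine ⟨4 / (min (α - 1) 0 + 1), by positivity, fun R k _ hR hk f hfm hsupp hbound ζ => ?_⟩
    rw [min_eq_right (show (1 : ℝ) ≤ α + 1 by linarith), Real.rpow_one]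
    exact norm_modifiedCauchyTransform_le_of_pos hpos hk hfm
      (fun z hz => hsupp z (hR.trans_lt hz)) hbound ζ
end
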